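/- arXiv:1906.04612 — 3 statements merged into one kernel-verified Lean document; each statement's English description precedes it below -/
import Mathlib

section
/- Let n be a positive natural number, let Δ : ℝⁿ → ℝ be integrable with respect to Lebesgue measure, and let g : ℝⁿ → ℝ be a probability density with respect to Lebesgue measure whose Fourier transform satisfies 𝓕g(ω) ≠ −1 for every ω ∈ ℝⁿ. If (Δ ∗ g)(x) = −Δ(x) for Lebesgue-almost every x ∈ ℝⁿ, then Δ(x) = 0 for Lebesgue-almost every x ∈ ℝⁿ. -/
/-!
Taking Fourier transforms turns `Δ ∗ g = -Δ` into `𝓕Δ · (𝓕g + 1) = 0`. As `𝓕g` never equals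
`-1`, the transform `𝓕Δ` vanishes identically, and a function in `L¹` with vanishing Fourier
transform is zero almost everywhere.
-/

open MeasureTheory Real
open scoped FourierTransform SchwartzMap Convolution

section

variable {V : Type*} [NormedAddCommGroup V] [InnerProductSpace ℝ V] [FiniteDimensional ℝ V]
  [MeasurableSpace V] [BorelSpace V]

theorem MeasureTheory.Integrable.ae_eq_zero_of_fourier_eq_zero {E : Type*} [NormedAddCommGroup E]
    [NormedSpace ℂ E] [CompleteSpace E] {f : V → E} (hf : Integrable f) (h : 𝓕 f = 0) :
    f =ᵐ[volume] 0 := by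
  refine ae_eq_zero_of_integral_contDiff_smul_eq_zero hf.locallyIntegrable fun ψ hψ hψ_supp => ?_
  -- Every test function is the Fourier transform of a Schwartz function, and `𝓕` is self-adjoint.
  let Ψ : 𝓢(V, ℂ) := (hψ_supp.comp_left Complex.ofReal_zero).toSchwartzMap
    (Complex.ofRealCLM.contDiff.comp hψ)
  let φ : 𝓢(V, ℂ) := 𝓕⁻ Ψ
  have hφ : 𝓕 ⇑φ = fun x => (ψ x : ℂ) := by
    rw [← SchwartzMap.fourier_coe, FourierTransform.fourier_fourierInv_eq]
    rfl
  calc ∫ x, ψ x • f x = ∫ x, 𝓕 ⇑φ x • f x := by simp [hφ, Complex.coe_smul]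
    _ = ∫ ξ, φ ξ • 𝓕 f ξ := by
        have := VectorFourier.integral_fourierIntegral_smul_eq_flip (L := innerₗ V)
          (μ := volume) (ν := volume) continuous_fourierChar continuous_inner φ.integrable hf
        rwa [flip_innerₗ] at this
    _ = 0 := by simp [h]

theorem MeasureTheory.Integrable.ae_eq_zero_of_convolution_eq_smul {f g : V → ℂ}
    (hf : Integrable f) (hg : Integrable g) {c : ℂ} (hc : ∀ ξ, 𝓕 g ξ ≠ c)
    (h : f ⋆[ContinuousLinearMap.mul ℂ ℂ] g =ᵐ[volume] c • f) : f =ᵐ[volume] 0 := by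
  refine hf.ae_eq_zero_of_fourier_eq_zero (funext fun ξ => ?_)
  have hsmul : 𝓕 (c • f) ξ = c * 𝓕 f ξ :=
    congrFun (VectorFourier.fourierIntegral_const_smul _ _ _ f c) ξ
  have hfg : 𝓕 f ξ * (𝓕 g ξ - c) = 0 := calc
    _ = 𝓕 (f ⋆[ContinuousLinearMap.mul ℂ ℂ] g) ξ - 𝓕 (c • f) ξ := by
      rw [Real.fourier_mul_convolution_eq hf hg, hsmul]
      ring
    _ = 0 := by rw [Real.fourier_congr_ae h, sub_self]
  exact (mul_eq_zero.1 hfg).resolve_right (sub_ne_zero.2 (hc ξ))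

end

theorem delta_eq_zero_of_convolution_eq_neg_general
    (n : ℕ)
    (Δ g : EuclideanSpace ℝ (Fin n) → ℝ)
    (hΔ_int : Integrable Δ)
    (hg_int : Integrable g)
    (hg_fourier : ∀ ω : EuclideanSpace ℝ (Fin n), 𝓕 (fun x => (g x : ℂ)) ω ≠ -1)
    (heq : ∀ᵐ x ∂(volume : Measure (EuclideanSpace ℝ (Fin n))),
      (∫ t, Δ t * g (x - t)) = -Δ x) :
    ∀ᵐ x ∂(volume : Measure (EuclideanSpace ℝ (Fin n))), Δ x = 0 := by
  have hconv : (fun x => (Δ x : ℂ)) ⋆[ContinuousLinearMap.mul ℂ ℂ] (fun x => (g x : ℂ))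
      =ᵐ[volume] (-1 : ℂ) • fun x => (Δ x : ℂ) := by
    filter_upwards [heq] with x hx
    simp only [convolution_def, ContinuousLinearMap.mul_apply', Pi.smul_apply, neg_one_smul]
    rw [← Complex.ofReal_neg, ← hx]
    exact_mod_cast integral_complex_ofReal (f := fun t => Δ t * g (x - t))
  filter_upwards [hΔ_int.ofReal.ae_eq_zero_of_convolution_eq_smul hg_int.ofReal hg_fourier hconv]
    with x hx
  exact Complex.ofReal_eq_zero.1 hx

/-- If `g` is a probability density whose Fourier transform never equals `−1`
and `Δ ∗ g = −Δ` a.e. for an integrable `Δ`, then `Δ = 0` a.e. -/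
theorem delta_eq_zero_of_convolution_eq_neg
    (n : ℕ) (hn : 0 < n)
    (Δ g : EuclideanSpace ℝ (Fin n) → ℝ)
    (hΔ_int : Integrable Δ)
    (hg_nn : ∀ x, 0 ≤ g x) (hg_meas : Measurable g)
    (hg_int : Integrable g) (hg_one : (∫ x, g x) = 1)
    (hg_fourier : ∀ ω : EuclideanSpace ℝ (Fin n), 𝓕 (fun x => (g x : ℂ)) ω ≠ -1)
    (heq : ∀ᵐ x ∂(volume : Measure (EuclideanSpace ℝ (Fin n))),
      (∫ t, Δ t * g (x - t)) = -Δ x) :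
    ∀ᵐ x ∂(volume : Measure (EuclideanSpace ℝ (Fin n))), Δ x = 0 :=
  delta_eq_zero_of_convolution_eq_neg_general n Δ g hΔ_int hg_int hg_fourier heq
end

section
/- Let n be a positive natural number and let p, q : ℝⁿ → ℝ be nonnegative integrable functions with respect to Lebesgue measure such that p(x) + q(x) > 0 for Lebesgue-almost every x ∈ ℝⁿ. Let D* : ℝⁿ → ℝ be defined by D*(x) = p(x)/(p(x) + q(x)). Then for every measurable function D : ℝⁿ → ℝ with 0 < D(x) < 1 for all x, such that the functions x ↦ p(x)·log(D(x)) + q(x)·log(1 − D(x)) and x ↦ p(x)·log(D*(x)) + q(x)·log(1 − D*(x)) are integrable, one has ∫ [p(x)·log(D(x)) + q(x)·log(1 − D(x))] dx ≤ ∫ [p(x)·log(D*(x)) + q(x)·log(1 − D*(x))] dx. -/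
/-!
The objective is maximized pointwise: with `s = a / (a + b)`, the inequality `log x ≤ x - 1`
applied to `t / s` and `(1 - t) / (1 - s)` gives `a log t + b log (1 - t) ≤ a log s + b log (1 - s)`
for every `t ∈ (0, 1)`; take `t = D x` and integrate.
-/

open MeasureTheory Real

lemma mul_log_sub_mul_log_div_le {a c t : ℝ} (ha : 0 ≤ a) (hc : 0 < c) (ht : 0 < t) :
    a * log t - a * log (a / c) ≤ c * t - a := by
  rcases ha.eq_or_lt with rfl | ha
  · simpa using (mul_pos hc ht).le
  have hlog : log (t / (a / c)) ≤ t / (a / c) - 1 :=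
    log_le_sub_one_of_pos (div_pos ht (div_pos ha hc))
  rw [log_div ht.ne' (div_pos ha hc).ne'] at hlog
  calc a * log t - a * log (a / c) = a * (log t - log (a / c)) := by ring
    _ ≤ a * (t / (a / c) - 1) := mul_le_mul_of_nonneg_left hlog ha.le
    _ = c * t - a := by field_simp

theorem mul_log_add_mul_log_one_sub_le {a b t : ℝ} (ha : 0 ≤ a) (hb : 0 ≤ b)
    (ht₀ : 0 < t) (ht₁ : t < 1) :
    a * log t + b * log (1 - t) ≤ a * log (a / (a + b)) + b * log (1 - a / (a + b)) := by
  rcases (add_nonneg ha hb).eq_or_lt with hab | hab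
  · obtain ⟨rfl, rfl⟩ : a = 0 ∧ b = 0 := ⟨by linarith, by linarith⟩
    simp
  have hpos := mul_log_sub_mul_log_div_le ha hab ht₀
  have hneg := mul_log_sub_mul_log_div_le hb hab (sub_pos.2 ht₁)
  rw [one_sub_div hab.ne', add_sub_cancel_left]
  linarith

theorem optimal_discriminator_general
    (n : ℕ)
    (p q : EuclideanSpace ℝ (Fin n) → ℝ)
    (hp_nn : ∀ x, 0 ≤ p x)
    (hq_nn : ∀ x, 0 ≤ q x)
    (Dstar : EuclideanSpace ℝ (Fin n) → ℝ)
    (hDstar : Dstar = fun x => p x / (p x + q x)) :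
    ∀ D : EuclideanSpace ℝ (Fin n) → ℝ, Measurable D → (∀ x, 0 < D x ∧ D x < 1) →
      Integrable (fun x => p x * Real.log (D x) + q x * Real.log (1 - D x)) →
      Integrable (fun x => p x * Real.log (Dstar x) + q x * Real.log (1 - Dstar x)) →
      (∫ x, p x * Real.log (D x) + q x * Real.log (1 - D x)) ≤
        ∫ x, p x * Real.log (Dstar x) + q x * Real.log (1 - Dstar x) := by
  rintro D - hD hD_int hDstar_int
  subst hDstar
  exact integral_mono hD_int hDstar_int fun x =>
    mul_log_add_mul_log_one_sub_le (hp_nn x) (hq_nn x) (hD x).1 (hD x).2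

/-- The optimal discriminator: among all discriminators `D` with values in
`(0,1)`, the adversarial objective `∫ p·log D + q·log(1−D)` is maximized by
`D*(x) = p(x)/(p(x)+q(x))`. -/
theorem optimal_discriminator
    (n : ℕ) (hn : 0 < n)
    (p q : EuclideanSpace ℝ (Fin n) → ℝ)
    (hp_nn : ∀ x, 0 ≤ p x) (hp_int : Integrable p)
    (hq_nn : ∀ x, 0 ≤ q x) (hq_int : Integrable q)
    (hpos : ∀ᵐ x ∂(volume : Measure (EuclideanSpace ℝ (Fin n))), 0 < p x + q x)
    (Dstar : EuclideanSpace ℝ (Fin n) → ℝ)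
    (hDstar : Dstar = fun x => p x / (p x + q x)) :
    ∀ D : EuclideanSpace ℝ (Fin n) → ℝ, Measurable D → (∀ x, 0 < D x ∧ D x < 1) →
      Integrable (fun x => p x * Real.log (D x) + q x * Real.log (1 - D x)) →
      Integrable (fun x => p x * Real.log (Dstar x) + q x * Real.log (1 - Dstar x)) →
      (∫ x, p x * Real.log (D x) + q x * Real.log (1 - D x)) ≤
        ∫ x, p x * Real.log (Dstar x) + q x * Real.log (1 - Dstar x) :=
  optimal_discriminator_general n p q hp_nn hq_nn Dstar hDstar
end

section
/- Let n be a positive natural number and let p, q : ℝⁿ → ℝ be probability densities with respect to Lebesgue measure. Let μ and ν be the probability measures with densities p and q respectively, and let m = (1/2)(μ + ν). If the functions x ↦ p(x)·log(2p(x)/(p(x)+q(x))) and x ↦ q(x)·log(2q(x)/(p(x)+q(x))) are integrable (with the convention that the integrand is 0 where the numerator density vanishes), then ∫ p(x)·log(p(x)/(p(x)+q(x))) dx + ∫ q(x)·log(q(x)/(p(x)+q(x))) dx = −2·log 2 + KL(μ ‖ m) + KL(ν ‖ m). -/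
/-!
Write `μ = ρ.withDensity p`, `ν = ρ.withDensity q`. The mixture is
`m = ρ.withDensity ((p + q) / 2)`, so the log-likelihood ratio of `μ` against `m` is
`log (2p / (p + q))` and, `μ` and `m` having the same mass, `KL(μ ‖ m) = ∫ p log (2p / (p + q))`.
Splitting `log (p / (p + q))` as `log (2p / (p + q)) - log 2` in both integrals gives the
identity. The integrand `p log (2p / (p + q))` is integrable, lying between `(p - q) / 2` and
`p log 2`.
-/

open MeasureTheory Real
open scoped ENNReal Classical

/-- The Kullback–Leibler divergence of `μ` from `ν`: `∫ log(dμ/dν) dμ` when `μ ≪ ν`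
and the log-likelihood ratio is integrable, and `∞` otherwise. -/
noncomputable def klDiv {α : Type*} [MeasurableSpace α] (μ ν : Measure α) : ℝ≥0∞ :=
  if μ ≪ ν ∧ Integrable (llr μ ν) μ then ENNReal.ofReal (∫ x, llr μ ν x ∂μ) else ⊤

section

variable {a b : ℝ}

lemma sub_div_two_le_mul_log_two_mul_div_add (ha : 0 ≤ a) (hb : 0 ≤ b) :
    (a - b) / 2 ≤ a * log (2 * a / (a + b)) := by
  rcases ha.eq_or_lt with rfl | ha
  · rw [zero_mul]
    linarith
  calc (a - b) / 2 = a * (1 - (2 * a / (a + b))⁻¹) := by field_simp; ring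
    _ ≤ a * log (2 * a / (a + b)) := by
      gcongr
      exact one_sub_inv_le_log_of_pos (by positivity)

lemma mul_log_two_mul_div_add_le (ha : 0 ≤ a) (hb : 0 ≤ b) :
    a * log (2 * a / (a + b)) ≤ a * log 2 := by
  rcases ha.eq_or_lt with rfl | ha
  · simp
  gcongr
  rw [div_le_iff₀ (by positivity)]
  linarith

lemma mul_log_div_add_eq (ha : 0 ≤ a) (hb : 0 ≤ b) :
    a * log (a / (a + b)) = a * log (2 * a / (a + b)) - a * log 2 := by
  rcases ha.eq_or_lt with rfl | ha
  · simp
  rw [mul_div_assoc, log_mul two_ne_zero (by positivity)]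
  ring

end

section

variable {α : Type*} [MeasurableSpace α]

-- `InformationTheory.klDiv` carries the extra term `ν.real univ - μ.real univ`.
lemma klDiv_eq_informationTheory_klDiv {μ ν : Measure α} (h : μ Set.univ = ν Set.univ) :
    klDiv μ ν = InformationTheory.klDiv μ ν := by
  by_cases hμν : μ ≪ ν ∧ Integrable (llr μ ν) μ
  · rw [klDiv, if_pos hμν, InformationTheory.klDiv_of_ac_of_integrable hμν.1 hμν.2,
      measureReal_def, measureReal_def, h, add_sub_cancel_right]
  · rw [klDiv, if_neg hμν, eq_comm, InformationTheory.klDiv_eq_top_iff]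
    exact fun hac hint => hμν ⟨hac, hint⟩

lemma toReal_klDiv_of_measure_univ_eq {μ ν : Measure α} [IsFiniteMeasure μ] [IsFiniteMeasure ν]
    (hμν : μ ≪ ν) (h : μ Set.univ = ν Set.univ) :
    (klDiv μ ν).toReal = ∫ x, llr μ ν x ∂μ := by
  rw [klDiv_eq_informationTheory_klDiv h, InformationTheory.toReal_klDiv_of_measure_eq hμν h]

variable {ρ : Measure α} {p q : α → ℝ}

lemma withDensity_ofReal_univ (hp_nn : 0 ≤ p) (hp_int : Integrable p ρ) :
    ρ.withDensity (fun x => ENNReal.ofReal (p x)) Set.univ =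
      ENNReal.ofReal (∫ x, p x ∂ρ) := by
  rw [withDensity_apply _ MeasurableSet.univ, Measure.restrict_univ,
    ofReal_integral_eq_lintegral_ofReal hp_int (ae_of_all _ hp_nn)]

lemma inv_two_smul_add_withDensity_ofReal (hp_meas : Measurable p) (hp_nn : 0 ≤ p)
    (hq_nn : 0 ≤ q) :
    (2⁻¹ : ℝ≥0∞) • (ρ.withDensity (fun x => ENNReal.ofReal (p x)) +
        ρ.withDensity (fun x => ENNReal.ofReal (q x))) =
      ρ.withDensity (fun x => ENNReal.ofReal ((p x + q x) / 2)) := by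
  rw [← withDensity_add_left hp_meas.ennreal_ofReal, ← withDensity_smul' _ _ (by simp)]
  congr with x
  rw [ENNReal.ofReal_div_of_pos two_pos, ENNReal.ofReal_add (hp_nn x) (hq_nn x)]
  simp [ENNReal.div_eq_inv_mul]

lemma llr_withDensity_ofReal [SigmaFinite ρ] (hp_meas : Measurable p) (hq_meas : Measurable q)
    (hp_nn : 0 ≤ p) (hq_nn : 0 ≤ q)
    (hpq : ρ.withDensity (fun x => ENNReal.ofReal (p x)) ≪
      ρ.withDensity (fun x => ENNReal.ofReal (q x))) :
    llr (ρ.withDensity fun x => ENNReal.ofReal (p x))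
        (ρ.withDensity fun x => ENNReal.ofReal (q x))
      =ᵐ[ρ.withDensity fun x => ENNReal.ofReal (p x)] fun x => log (p x / q x) := by
  have hρ : ρ.withDensity (fun x => ENNReal.ofReal (p x)) ≪ ρ :=
    withDensity_absolutelyContinuous _ _
  filter_upwards [hpq.ae_le (Measure.rnDeriv_eq_div
      (withDensity_absolutelyContinuous ρ fun x => ENNReal.ofReal (p x))
      (withDensity_absolutelyContinuous ρ fun x => ENNReal.ofReal (q x))),
    hρ.ae_le (Measure.rnDeriv_withDensity ρ hp_meas.ennreal_ofReal),
    hρ.ae_le (Measure.rnDeriv_withDensity ρ hq_meas.ennreal_ofReal)] with x h_ratio hp hq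
  rw [llr, h_ratio, hp, hq, ENNReal.toReal_div, ENNReal.toReal_ofReal (hp_nn x),
    ENNReal.toReal_ofReal (hq_nn x)]

lemma integral_withDensity_ofReal (hp_meas : Measurable p) (hp_nn : 0 ≤ p) (f : α → ℝ) :
    ∫ x, f x ∂(ρ.withDensity fun x => ENNReal.ofReal (p x)) = ∫ x, p x * f x ∂ρ := by
  rw [integral_withDensity_eq_integral_toReal_smul hp_meas.ennreal_ofReal
    (ae_of_all _ fun _ => ENNReal.ofReal_lt_top)]
  simp [ENNReal.toReal_ofReal (hp_nn _)]

lemma toReal_klDiv_withDensity_ofReal_mixture [SigmaFinite ρ]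
    (hp_nn : 0 ≤ p) (hp_meas : Measurable p) (hp_int : Integrable p ρ)
    (hq_nn : 0 ≤ q) (hq_meas : Measurable q) (hq_int : Integrable q ρ)
    (h_mass : ∫ x, p x ∂ρ = ∫ x, q x ∂ρ) :
    (klDiv (ρ.withDensity fun x => ENNReal.ofReal (p x))
        ((2⁻¹ : ℝ≥0∞) • (ρ.withDensity (fun x => ENNReal.ofReal (p x)) +
          ρ.withDensity (fun x => ENNReal.ofReal (q x))))).toReal =
      ∫ x, p x * log (2 * p x / (p x + q x)) ∂ρ := by
  have hac : ρ.withDensity (fun x => ENNReal.ofReal (p x)) ≪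
      (2⁻¹ : ℝ≥0∞) • (ρ.withDensity (fun x => ENNReal.ofReal (p x)) +
        ρ.withDensity (fun x => ENNReal.ofReal (q x))) :=
    (Measure.AbsolutelyContinuous.rfl.add_right _).smul_right (by simp)
  have hm_nn : 0 ≤ fun x => (p x + q x) / 2 := fun x => by linarith [hp_nn x, hq_nn x]
  have hm_int : Integrable (fun x => (p x + q x) / 2) ρ := (hp_int.add hq_int).div_const 2
  have h_univ : ρ.withDensity (fun x => ENNReal.ofReal (p x)) Set.univ =
      ρ.withDensity (fun x => ENNReal.ofReal ((p x + q x) / 2)) Set.univ := by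
    rw [withDensity_ofReal_univ hp_nn hp_int, withDensity_ofReal_univ hm_nn hm_int,
      integral_div, integral_add hp_int hq_int, ← h_mass, add_self_div_two]
  have := isFiniteMeasure_withDensity_ofReal hp_int.2
  have := isFiniteMeasure_withDensity_ofReal hm_int.2
  rw [inv_two_smul_add_withDensity_ofReal hp_meas hp_nn hq_nn] at hac ⊢
  rw [toReal_klDiv_of_measure_univ_eq hac h_univ,
    integral_congr_ae (llr_withDensity_ofReal hp_meas (by fun_prop) hp_nn hm_nn hac),
    integral_withDensity_ofReal hp_meas hp_nn]
  congr with x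
  rw [div_div_eq_mul_div, mul_comm (p x) 2]

lemma integrable_mul_log_two_mul_div_add
    (hp_nn : 0 ≤ p) (hp_meas : Measurable p) (hp_int : Integrable p ρ)
    (hq_nn : 0 ≤ q) (hq_meas : Measurable q) (hq_int : Integrable q ρ) :
    Integrable (fun x => p x * log (2 * p x / (p x + q x))) ρ :=
  integrable_of_le_of_le (by fun_prop)
    (ae_of_all _ fun x => sub_div_two_le_mul_log_two_mul_div_add (hp_nn x) (hq_nn x))
    (ae_of_all _ fun x => mul_log_two_mul_div_add_le (hp_nn x) (hq_nn x))
    ((hp_int.sub hq_int).div_const 2) (hp_int.mul_const _)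

lemma integral_mul_log_div_add
    (hp_nn : 0 ≤ p) (hp_meas : Measurable p) (hp_int : Integrable p ρ)
    (hq_nn : 0 ≤ q) (hq_meas : Measurable q) (hq_int : Integrable q ρ) :
    ∫ x, p x * log (p x / (p x + q x)) ∂ρ =
      ∫ x, p x * log (2 * p x / (p x + q x)) ∂ρ - (∫ x, p x ∂ρ) * log 2 := by
  simp_rw [mul_log_div_add_eq (hp_nn _) (hq_nn _)]
  rw [integral_sub (integrable_mul_log_two_mul_div_add hp_nn hp_meas hp_int hq_nn hq_meas hq_int)
    (hp_int.mul_const _), integral_mul_const]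

end

theorem objective_eq_jsd_general
    (n : ℕ)
    (p q : EuclideanSpace ℝ (Fin n) → ℝ)
    (hp_nn : ∀ x, 0 ≤ p x) (hp_meas : Measurable p)
    (hp_int : Integrable p) (hp_one : (∫ x, p x) = 1)
    (hq_nn : ∀ x, 0 ≤ q x) (hq_meas : Measurable q)
    (hq_int : Integrable q) (hq_one : (∫ x, q x) = 1)
    (μ ν m : Measure (EuclideanSpace ℝ (Fin n)))
    (hμ : μ = volume.withDensity (fun x => ENNReal.ofReal (p x)))
    (hν : ν = volume.withDensity (fun x => ENNReal.ofReal (q x)))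
    (hm : m = (2⁻¹ : ℝ≥0∞) • (μ + ν)) :
    (∫ x, p x * Real.log (p x / (p x + q x))) + (∫ x, q x * Real.log (q x / (p x + q x))) =
      -2 * Real.log 2 + (klDiv μ m).toReal + (klDiv ν m).toReal := by
  have h_mass : ∫ x, p x = ∫ x, q x := hp_one.trans hq_one.symm
  have h_comm : ∀ x, q x + p x = p x + q x := fun x => add_comm _ _
  have hKL_μ := toReal_klDiv_withDensity_ofReal_mixture hp_nn hp_meas hp_int hq_nn hq_meas hq_int
    h_mass
  have hKL_ν := toReal_klDiv_withDensity_ofReal_mixture hq_nn hq_meas hq_int hp_nn hp_meas hp_int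
    h_mass.symm
  have hJS_q := integral_mul_log_div_add hq_nn hq_meas hq_int hp_nn hp_meas hp_int
  rw [add_comm (volume.withDensity _)] at hKL_ν
  simp only [h_comm] at hKL_ν hJS_q
  subst hμ hν hm
  rw [hKL_μ, hKL_ν, integral_mul_log_div_add hp_nn hp_meas hp_int hq_nn hq_meas hq_int, hJS_q,
    hp_one, hq_one]
  ring

/-- Substituting the optimal discriminator into the adversarial objective
yields, up to the constant `−2 log 2 = −log 4`, the sum of the two Kullback–Leibler
divergences from the mixture (i.e. twice the Jensen–Shannon divergence). -/
theorem objective_eq_jsd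
    (n : ℕ) (hn : 0 < n)
    (p q : EuclideanSpace ℝ (Fin n) → ℝ)
    (hp_nn : ∀ x, 0 ≤ p x) (hp_meas : Measurable p)
    (hp_int : Integrable p) (hp_one : (∫ x, p x) = 1)
    (hq_nn : ∀ x, 0 ≤ q x) (hq_meas : Measurable q)
    (hq_int : Integrable q) (hq_one : (∫ x, q x) = 1)
    (μ ν m : Measure (EuclideanSpace ℝ (Fin n)))
    (hμ : μ = volume.withDensity (fun x => ENNReal.ofReal (p x)))
    (hν : ν = volume.withDensity (fun x => ENNReal.ofReal (q x)))
    (hm : m = (2⁻¹ : ℝ≥0∞) • (μ + ν))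
    (hint_p : Integrable (fun x => p x * Real.log (2 * p x / (p x + q x))))
    (hint_q : Integrable (fun x => q x * Real.log (2 * q x / (p x + q x)))) :
    (∫ x, p x * Real.log (p x / (p x + q x))) + (∫ x, q x * Real.log (q x / (p x + q x))) =
      -2 * Real.log 2 + (klDiv μ m).toReal + (klDiv ν m).toReal :=
  objective_eq_jsd_general n p q hp_nn hp_meas hp_int hp_one hq_nn hq_meas hq_int hq_one μ ν m hμ hν
    hm
end
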